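/- Let A be an n-by-n weighted shift matrix (n ≥ 3) with weights a_1, …, a_n, all nonzero. Then A is reducible if and only if A has periodic weights, i.e., there exists a fixed k with 1 ≤ k ≤ ⌊n/2⌋ such that k divides n and |a_j| = |a_{k+j}| for all 1 ≤ j ≤ n−k. -/

import Mathlib

open Matrix

/-- The n-by-n weighted shift matrix with weights `a 0, …, a (n-1)`
(representing `a_1, …, a_n`): the `(i, i+1)` entry is `a i` (cyclically). -/
def wsMatrix {n : ℕ} (a : Fin n → ℂ) : Matrix (Fin n) (Fin n) ℂ :=
  fun i j => if (j : ℕ) = ((i : ℕ) + 1) % n then a i else 0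

/-- Two square complex matrices are unitarily equivalent if `B = U* A U`
for some unitary `U`. -/
def UnitarilyEquiv {n : ℕ} (A B : Matrix (Fin n) (Fin n) ℂ) : Prop :=
  ∃ U : Matrix (Fin n) (Fin n) ℂ, U ∈ Matrix.unitaryGroup (Fin n) ℂ ∧ B = Uᴴ * A * U

/-- A square complex matrix is reducible if some orthogonal projection `P`
other than `0` and `I` commutes with it (equivalently, `A` and `Aᴴ` have a
common nontrivial invariant subspace). -/
def MatReducible {n : ℕ} (A : Matrix (Fin n) (Fin n) ℂ) : Prop :=
  ∃ P : Matrix (Fin n) (Fin n) ℂ, P * P = P ∧ Pᴴ = P ∧ P ≠ 0 ∧ P ≠ 1 ∧ A * P = P * A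

/-- The weights `a_1, …, a_n` (0-indexed as `a 0, …, a (n-1)`) are periodic with
period `k`: `1 ≤ k ≤ ⌊n/2⌋`, `k ∣ n` and `|a_j| = |a_{k+j}|` for `1 ≤ j ≤ n-k`. -/
def PeriodicWeights (n k : ℕ) (a : Fin n → ℂ) : Prop :=
  1 ≤ k ∧ k ≤ n / 2 ∧ k ∣ n ∧
    ∀ i : Fin n, ∀ h : (i : ℕ) + k < n,
      ‖a i‖ = ‖a ⟨(i : ℕ) + k, h⟩‖

/-!
If a nontrivial orthogonal projection `P` commutes with `A`, it also commutes with
`A * Aᴴ = diagonal |aᵢ|²`, so `P i j ≠ 0` forces `|a i| = |a j|`. Commuting with `A` reads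
`a i * P (i+1) (j+1) = P i j * a j`, so with nonzero weights the support of `P` is invariant
under `(i, j) ↦ (i + 1, j + 1)`. A diagonal `P` would then be scalar, hence `0` or `1`; so `P`
has a nonzero entry at some offset `d ≠ 0`, `|a|` is `d`-periodic on `ℤ/n`, and hence
`gcd(d, n)`-periodic.

Conversely, conjugating by a diagonal unitary changes the weights into any `b` with
`|bᵢ| = |aᵢ|` and `∏ bᵢ = ∏ aᵢ`. Taking `bᵢ = ω |aᵢ|` with `ωⁿ = ∏ aᵢ / ∏ |aᵢ|` makes the
weights themselves `k`-periodic, and such a shift commutes with the orthogonal projection onto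
the vectors that are constant on residue classes mod `k`.
-/

open Finset Fin.NatCast Fin.CommRing

theorem Fin.card_filter_val_mod_eq {n k : ℕ} (hk : k ∣ n) (hk0 : 0 < k) (r : ℕ) :
    #{l : Fin n | (l : ℕ) % k = r % k} = n / k := by
  have hcount := Nat.count_modEq_card n hk0 r
  rw [Nat.mod_eq_zero_of_dvd hk, if_neg (Nat.not_lt_zero _), add_zero,
    Nat.count_eq_card_filter_range] at hcount
  rw [← hcount, card_filter, card_filter,
    Fin.sum_univ_eq_sum_range (fun l => if l % k = r % k then 1 else 0)]
  rfl

section FinArith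

variable {n : ℕ} [NeZero n]

theorem Fin.val_add_one_eq_mod (i : Fin n) : ((i + 1 : Fin n) : ℕ) = ((i : ℕ) + 1) % n := by
  rw [Fin.val_add, Fin.val_one', Nat.add_mod_mod]

theorem Fin.val_add_one_mod_of_dvd {k : ℕ} (hk : k ∣ n) (i : Fin n) :
    ((i + 1 : Fin n) : ℕ) % k = ((i : ℕ) + 1) % k := by
  rw [Fin.val_add_one_eq_mod, Nat.mod_mod_of_dvd _ hk]

theorem Fin.apply_add_gcd_eq {α : Type*} {f : Fin n → α} {d : Fin n} (h : ∀ i, f (i + d) = f i)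
    (i : Fin n) : f (i + (Nat.gcd d n : Fin n)) = f i := by
  have hmul : ∀ s : ℕ, ∀ i, f (i + s * d) = f i := by
    intro s
    induction s with
    | zero => simp
    | succ s ih => intro i; rw [Nat.cast_succ, add_one_mul, ← add_assoc, h, ih]
  rcases Nat.eq_zero_or_pos (d : ℕ) with hd | hd
  · simp [hd]
  have hlt : Nat.gcd d n < n := (Nat.gcd_le_left n hd).trans_lt d.isLt
  obtain ⟨x, -, hx⟩ := Nat.exists_mul_mod_eq_gcd hlt
  have hgcd : (Nat.gcd d n : Fin n) = x * d := by
    have hcast : (Nat.gcd d n : Fin n) = ((d * x : ℕ) : Fin n) :=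
      Fin.ext (by rw [Fin.val_natCast, Fin.val_natCast, hx, Nat.mod_eq_of_lt hlt])
    rw [hcast, Nat.cast_mul, Fin.cast_val_eq_self, mul_comm]
  rw [hgcd, hmul]

end FinArith

theorem star_mul_self_of_norm_eq_one {z : ℂ} (hz : ‖z‖ = 1) : star z * z = 1 := by
  rw [RCLike.star_def, Complex.conj_mul', hz]
  norm_num

theorem eq_of_commute_diagonal {α : Type*} [CommRing α] [IsDomain α] {m : Type*} [Fintype m]
    [DecidableEq m] {d : m → α} {P : Matrix m m α} (hP : Commute (diagonal d) P) {i j : m}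
    (hij : P i j ≠ 0) : d i = d j := by
  have h := congrFun (congrFun hP.eq i) j
  rw [diagonal_mul, mul_diagonal, mul_comm] at h
  exact mul_left_cancel₀ hij h

theorem MatReducible.of_unitarilyEquiv {n : ℕ} {A B : Matrix (Fin n) (Fin n) ℂ}
    (hAB : UnitarilyEquiv A B) (hB : MatReducible B) : MatReducible A := by
  obtain ⟨U, hU, rfl⟩ := hAB
  obtain ⟨Q, hQ2, hQH, hQ0, hQ1, hQ⟩ := hB
  let φ := Unitary.conjStarAlgAut ℂ (Matrix (Fin n) (Fin n) ℂ) ⟨U, hU⟩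
  have hA : A = φ (Uᴴ * A * U) := (φ.apply_symm_apply A).symm
  refine ⟨φ Q, ?_, ?_, ?_, ?_, ?_⟩
  · rw [← map_mul, hQ2]
  · rw [← star_eq_conjTranspose, ← map_star, star_eq_conjTranspose, hQH]
  · exact (map_ne_zero_iff φ φ.injective).mpr hQ0
  · exact fun h => hQ1 (φ.injective (h.trans (map_one φ).symm))
  · rw [hA, ← map_mul, ← map_mul, hQ]

section WeightedShift

variable {n : ℕ} [NeZero n]

theorem wsMatrix_apply (a : Fin n → ℂ) (i j : Fin n) :
    wsMatrix a i j = if j = i + 1 then a i else 0 := by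
  simp only [wsMatrix, Fin.ext_iff, Fin.val_add_one_eq_mod]

theorem wsMatrix_mul_apply (a : Fin n → ℂ) (P : Matrix (Fin n) (Fin n) ℂ) (i j : Fin n) :
    (wsMatrix a * P) i j = a i * P (i + 1) j := by
  simp [Matrix.mul_apply, wsMatrix_apply]

theorem mul_wsMatrix_apply (a : Fin n → ℂ) (P : Matrix (Fin n) (Fin n) ℂ) (i j : Fin n) :
    (P * wsMatrix a) i j = P i (j - 1) * a (j - 1) := by
  simp [Matrix.mul_apply, wsMatrix_apply, eq_comm (a := j), ← eq_sub_iff_add_eq]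

theorem wsMatrix_mul_conjTranspose (a : Fin n → ℂ) :
    wsMatrix a * (wsMatrix a)ᴴ = diagonal fun i => (Complex.normSq (a i) : ℂ) := by
  ext i j
  rw [wsMatrix_mul_apply, conjTranspose_apply, wsMatrix_apply, diagonal_apply]
  by_cases hij : i = j
  · simp [hij, Complex.mul_conj]
  · simp [hij]

theorem conjTranspose_diagonal_mul_wsMatrix_mul_diagonal (u a : Fin n → ℂ) :
    (diagonal u)ᴴ * wsMatrix a * diagonal u = wsMatrix fun i => star (u i) * a i * u (i + 1) := by
  ext i j
  rw [diagonal_conjTranspose, mul_diagonal, diagonal_mul, wsMatrix_apply, wsMatrix_apply]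
  split_ifs with h <;> simp [h]

namespace Commute

variable {a : Fin n → ℂ} {P : Matrix (Fin n) (Fin n) ℂ}

theorem wsMatrix_apply_add_one (hP : Commute (wsMatrix a) P) (i j : Fin n) :
    a i * P (i + 1) (j + 1) = P i j * a j := by
  have h := congrFun (congrFun hP.eq i) (j + 1)
  rwa [wsMatrix_mul_apply, mul_wsMatrix_apply, add_sub_cancel_right] at h

theorem wsMatrix_apply_add_ne_zero (hP : Commute (wsMatrix a) P) (ha : ∀ i, a i ≠ 0)
    {i j : Fin n} (hij : P i j ≠ 0) (t : Fin n) : P (i + t) (j + t) ≠ 0 := by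
  suffices ∀ s : ℕ, P (i + s) (j + s) ≠ 0 by simpa using this t
  intro s
  induction s with
  | zero => simpa using hij
  | succ s ih =>
    have h := hP.wsMatrix_apply_add_one (i + s) (j + s)
    rw [Nat.cast_succ, ← add_assoc, ← add_assoc]
    exact right_ne_zero_of_mul (h ▸ mul_ne_zero ih (ha _))

theorem wsMatrix_norm_eq_of_apply_ne_zero (hP : Commute (wsMatrix a) P) (hPH : Pᴴ = P)
    {i j : Fin n} (hij : P i j ≠ 0) : ‖a i‖ = ‖a j‖ := by
  have hstar : Commute (wsMatrix a)ᴴ P := hPH ▸ hP.star_star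
  have hdiag := eq_of_commute_diagonal (wsMatrix_mul_conjTranspose a ▸ hP.mul_left hstar) hij
  rw [Complex.norm_def, Complex.norm_def, Complex.ofReal_inj.mp hdiag]

theorem wsMatrix_exists_offDiag_ne_zero (hP : Commute (wsMatrix a) P) (ha : ∀ i, a i ≠ 0)
    (hP2 : P * P = P) (hP0 : P ≠ 0) (hP1 : P ≠ 1) : ∃ i j, i ≠ j ∧ P i j ≠ 0 := by
  by_contra! hdiag
  have hconst : ∀ s : ℕ, P s s = P 0 0 := by
    intro s
    induction s with
    | zero => simp
    | succ s ih =>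
      have h := hP.wsMatrix_apply_add_one s s
      rw [mul_comm (P _ _)] at h
      rw [Nat.cast_succ, mul_left_cancel₀ (ha _) h, ih]
  have hscalar : P = P 0 0 • 1 := by
    ext i j
    by_cases hij : i = j
    · simpa [hij] using hconst j
    · simp [hij, hdiag i j hij]
  have hidem : P 0 0 * P 0 0 = P 0 0 := by
    have h := congrFun (congrFun hP2 0) 0
    rw [hscalar] at h
    simpa using h
  rcases IsIdempotentElem.iff_eq_zero_or_one.mp hidem with h | h
  · exact hP0 (by rw [hscalar, h, zero_smul])
  · exact hP1 (by rw [hscalar, h, one_smul])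

end Commute

theorem periodicWeights_of_norm_add_eq {a : Fin n → ℂ} {k : ℕ} (hk0 : 0 < k) (hkn : k < n)
    (hkd : k ∣ n) (h : ∀ i, ‖a (i + (k : Fin n))‖ = ‖a i‖) : PeriodicWeights n k a := by
  refine ⟨hk0, ?_, hkd, fun i hi => ?_⟩
  · obtain ⟨m, rfl⟩ := hkd
    rw [Nat.le_div_iff_mul_le two_pos]
    exact Nat.mul_le_mul_left k (Nat.lt_mul_iff_one_lt_right hk0 |>.mp hkn)
  · rw [← h i]
    congr
    ext
    simp [Fin.val_add, Nat.mod_eq_of_lt hkn, Nat.mod_eq_of_lt hi]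

theorem exists_periodicWeights_of_matReducible {a : Fin n → ℂ} (ha : ∀ i, a i ≠ 0)
    (h : MatReducible (wsMatrix a)) : ∃ k, PeriodicWeights n k a := by
  obtain ⟨P, hP2, hPH, hP0, hP1, hP : Commute (wsMatrix a) P⟩ := h
  obtain ⟨i, j, hij, hPij⟩ := hP.wsMatrix_exists_offDiag_ne_zero ha hP2 hP0 hP1
  have hd : ∀ l, ‖a (l + (j - i))‖ = ‖a l‖ := fun l => by
    have h := hP.wsMatrix_apply_add_ne_zero ha hPij (l - i)
    rw [add_sub_cancel, add_sub_left_comm] at h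
    exact (hP.wsMatrix_norm_eq_of_apply_ne_zero hPH h).symm
  have hd0 : 0 < ((j - i : Fin n) : ℕ) := Fin.pos_iff_ne_zero.mpr (sub_ne_zero.mpr hij.symm)
  exact ⟨_, periodicWeights_of_norm_add_eq (Nat.gcd_pos_of_pos_right _ n.pos_of_neZero)
    ((Nat.gcd_le_left n hd0).trans_lt (j - i).isLt) (Nat.gcd_dvd_right _ _)
    (Fin.apply_add_gcd_eq (f := fun l => ‖a l‖) hd)⟩

theorem unitarilyEquiv_wsMatrix_of_norm_eq {a b : Fin n → ℂ} (ha : ∀ i, a i ≠ 0)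
    (hnorm : ∀ i, ‖b i‖ = ‖a i‖) (hprod : ∏ i, b i = ∏ i, a i) :
    UnitarilyEquiv (wsMatrix a) (wsMatrix b) := by
  let r : ℕ → ℂ := fun t => b t / a t
  let U : ℕ → ℂ := fun t => ∏ s ∈ range t, r s
  have hU : ∀ t, ‖U t‖ = 1 := fun t => by
    simp only [U, r, norm_prod, norm_div, hnorm, div_self (norm_ne_zero_iff.mpr (ha _)),
      prod_const_one]
  have hUn : U n = 1 := by
    simp only [U, r, ← Fin.prod_univ_eq_prod_range (fun t => b t / a t), Fin.cast_val_eq_self,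
      prod_div_distrib, hprod]
    exact div_self (prod_ne_zero_iff.mpr fun i _ => ha i)
  have hstep : ∀ i : Fin n, a i * U ((i + 1 : Fin n) : ℕ) = b i * U i := by
    intro i
    have hsucc : U ((i + 1 : Fin n) : ℕ) = U (i + 1) := by
      rw [Fin.val_add_one_eq_mod]
      rcases (show (i : ℕ) + 1 ≤ n from i.isLt).lt_or_eq with h | h
      · rw [Nat.mod_eq_of_lt h]
      · rw [h, Nat.mod_self, hUn]
        rfl
    simp only [hsucc, U, prod_range_succ, r, Fin.cast_val_eq_self]
    field_simp [ha i]
  refine ⟨diagonal fun i => U i, ?_, ?_⟩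
  · rw [mem_unitaryGroup_iff', star_eq_conjTranspose, diagonal_conjTranspose,
      diagonal_mul_diagonal, ← diagonal_one]
    congr 1
    funext i
    exact star_mul_self_of_norm_eq_one (hU _)
  · rw [conjTranspose_diagonal_mul_wsMatrix_mul_diagonal]
    congr 1
    funext i
    rw [mul_assoc, hstep, mul_left_comm, star_mul_self_of_norm_eq_one (hU _), mul_one]

end WeightedShift

/-- The orthogonal projection onto the vectors that are constant on residue classes mod `k`,
when `k ∣ n`. -/
noncomputable def residueClassProj (n k : ℕ) : Matrix (Fin n) (Fin n) ℂ :=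
  of fun i j => if (i : ℕ) % k = (j : ℕ) % k then ((n / k : ℕ) : ℂ)⁻¹ else 0

section ResidueClassProj

variable {n k : ℕ}

theorem residueClassProj_apply (i j : Fin n) :
    residueClassProj n k i j = if (i : ℕ) % k = (j : ℕ) % k then ((n / k : ℕ) : ℂ)⁻¹ else 0 :=
  rfl

theorem residueClassProj_mul_self (hk : k ∣ n) (hk0 : 0 < k) :
    residueClassProj n k * residueClassProj n k = residueClassProj n k := by
  ext i j
  have hterm : ∀ l : Fin n, residueClassProj n k i l * residueClassProj n k l j =
      if (l : ℕ) % k = (i : ℕ) % k then residueClassProj n k i j * ((n / k : ℕ) : ℂ)⁻¹ else 0 := by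
    intro l
    simp only [residueClassProj_apply]
    split_ifs <;> simp_all
  rw [mul_apply, sum_congr rfl fun l _ => hterm l, sum_ite, sum_const_zero, add_zero, sum_const,
    Fin.card_filter_val_mod_eq hk hk0, nsmul_eq_mul]
  have hm : ((n / k : ℕ) : ℂ) ≠ 0 := by
    exact_mod_cast (Nat.div_pos (Nat.le_of_dvd i.pos hk) hk0).ne'
  field_simp

theorem conjTranspose_residueClassProj : (residueClassProj n k)ᴴ = residueClassProj n k := by
  ext i j
  rw [conjTranspose_apply, residueClassProj_apply, residueClassProj_apply]
  by_cases h : (i : ℕ) % k = (j : ℕ) % k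
  · simp [h]
  · simp [h, Ne.symm h]

theorem residueClassProj_ne_zero (hk0 : 0 < k) (hkn : k ≤ n) : residueClassProj n k ≠ 0 := by
  intro h
  have h00 := congrFun (congrFun h ⟨0, by omega⟩) ⟨0, by omega⟩
  simp only [residueClassProj_apply, if_true, Matrix.zero_apply, inv_eq_zero,
    Nat.cast_eq_zero] at h00
  exact (Nat.div_pos hkn hk0).ne' h00

theorem residueClassProj_ne_one (hk0 : 0 < k) (hkn : k < n) : residueClassProj n k ≠ 1 := by
  intro h
  have h0k := congrFun (congrFun h ⟨0, by omega⟩) ⟨k, hkn⟩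
  rw [one_apply_ne (by simp [Fin.ext_iff]; omega), residueClassProj_apply, if_pos (by simp)] at h0k
  simp only [inv_eq_zero, Nat.cast_eq_zero] at h0k
  exact (Nat.div_pos hkn.le hk0).ne' h0k

theorem commute_wsMatrix_residueClassProj [NeZero n] (hk : k ∣ n) {b : Fin n → ℂ}
    (hb : ∀ i j : Fin n, (i : ℕ) % k = (j : ℕ) % k → b i = b j) :
    Commute (wsMatrix b) (residueClassProj n k) := by
  ext i j
  have hiff : ((i + 1 : Fin n) : ℕ) % k = (j : ℕ) % k ↔
      (i : ℕ) % k = ((j - 1 : Fin n) : ℕ) % k := by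
    conv_lhs => rw [← sub_add_cancel j 1]
    rw [Fin.val_add_one_mod_of_dvd hk, Fin.val_add_one_mod_of_dvd hk]
    exact ⟨Nat.ModEq.add_right_cancel' 1, Nat.ModEq.add_right 1⟩
  rw [wsMatrix_mul_apply, mul_wsMatrix_apply, residueClassProj_apply, residueClassProj_apply,
    if_congr hiff rfl rfl]
  split_ifs with h
  · rw [hb _ _ h, mul_comm]
  · simp

theorem matReducible_wsMatrix_of_mod_eq [NeZero n] (hk0 : 0 < k) (hkn : k < n) (hk : k ∣ n)
    {b : Fin n → ℂ} (hb : ∀ i j : Fin n, (i : ℕ) % k = (j : ℕ) % k → b i = b j) :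
    MatReducible (wsMatrix b) :=
  ⟨residueClassProj n k, residueClassProj_mul_self hk hk0, conjTranspose_residueClassProj,
    residueClassProj_ne_zero hk0 hkn.le, residueClassProj_ne_one hk0 hkn,
    commute_wsMatrix_residueClassProj hk hb⟩

end ResidueClassProj

theorem PeriodicWeights.norm_eq_of_mod_eq {n k : ℕ} {a : Fin n → ℂ} (h : PeriodicWeights n k a)
    {i j : Fin n} (hij : (i : ℕ) % k = (j : ℕ) % k) : ‖a i‖ = ‖a j‖ := by
  obtain ⟨-, -, -, hper⟩ := h
  have hstep : ∀ (q r : ℕ) (hr : r + k * q < n),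
      ‖a ⟨r + k * q, hr⟩‖ = ‖a ⟨r, (Nat.le_add_right r _).trans_lt hr⟩‖ := by
    intro q
    induction q with
    | zero => simp
    | succ q ih =>
      intro r hr
      have hq : r + k * q + k < n := by rwa [mul_add_one, ← add_assoc] at hr
      rw [← ih r (by omega), hper ⟨r + k * q, by omega⟩ hq]
      congr 2
      simp only [Fin.mk.injEq]
      ring
  have hres : ∀ l : Fin n, ‖a l‖ = ‖a ⟨l % k, (Nat.mod_le _ _).trans_lt l.isLt⟩‖ := fun l => by
    rw [← hstep (l / k) (l % k) (by rw [Nat.mod_add_div]; exact l.isLt)]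
    simp only [Nat.mod_add_div]
  rw [hres i, hres j]
  simp only [hij]

theorem matReducible_wsMatrix_of_periodicWeights {n k : ℕ} [NeZero n] {a : Fin n → ℂ}
    (ha : ∀ i, a i ≠ 0) (h : PeriodicWeights n k a) : MatReducible (wsMatrix a) := by
  have hmod : ∀ i j : Fin n, (i : ℕ) % k = (j : ℕ) % k → ‖a i‖ = ‖a j‖ :=
    fun _ _ => h.norm_eq_of_mod_eq
  obtain ⟨hk0, hk2, hkd, -⟩ := h
  have hkn : k < n := by omega
  have hnorm0 : ∏ i, (‖a i‖ : ℂ) ≠ 0 :=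
    prod_ne_zero_iff.mpr fun i _ => Complex.ofReal_ne_zero.mpr (norm_ne_zero_iff.mpr (ha i))
  obtain ⟨ω, hω⟩ := IsAlgClosed.exists_pow_nat_eq ((∏ i, a i) / ∏ i, (‖a i‖ : ℂ)) (NeZero.pos n)
  have hω1 : ‖ω‖ = 1 := by
    rw [← pow_eq_one_iff_of_nonneg (norm_nonneg ω) (NeZero.ne n), ← norm_pow, hω, norm_div,
      norm_prod, norm_prod]
    simp only [Complex.norm_real, norm_norm]
    exact div_self (prod_ne_zero_iff.mpr fun i _ => norm_ne_zero_iff.mpr (ha i))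
  have hprod : ∏ i, ω * ‖a i‖ = ∏ i, a i := by
    rw [prod_mul_distrib, prod_const, card_univ, Fintype.card_fin, hω, div_mul_cancel₀ _ hnorm0]
  refine (matReducible_wsMatrix_of_mod_eq (b := fun i => ω * ‖a i‖) hk0 hkn hkd
    fun i j hij => by rw [hmod i j hij]).of_unitarilyEquiv ?_
  exact unitarilyEquiv_wsMatrix_of_norm_eq ha (fun i => by simp [hω1]) hprod

theorem stmt10 (n : ℕ) (hn : 3 ≤ n) (a : Fin n → ℂ) (ha : ∀ i, a i ≠ 0) :
    MatReducible (wsMatrix a) ↔ ∃ k : ℕ, PeriodicWeights n k a := by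
  have : NeZero n := ⟨by omega⟩
  exact ⟨exists_periodicWeights_of_matReducible ha,
    fun ⟨_, hk⟩ => matReducible_wsMatrix_of_periodicWeights ha hk⟩
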